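/- Suppose r, Ω, ψ satisfy the toroidally symmetric Einstein–Klein-Gordon system (EKG1)–(EKG5) on U. Set r̃ = 1/r, ϖ₁ = 2rᵤrᵥr/Ω² + r³/(2l²), and ϖ₂ = ϖ₁ − (2πg/l²)r³ψ². Then the renormalised radial wave equation ∂ᵤ∂ᵥr̃ = Ω²r̃²( (3/2)ϖ₂r̃² − (πg²/(l²r̃))ψ² ) holds on U; equivalently, ∂ᵤ∂ᵥr̃ = 3Ω²ϖ₂/(2r⁴) − πg²Ω²ψ²/(l²r). -/

import Mathlib

/-- Partial derivative in the first (`u`) coordinate. -/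
noncomputable def pdu (f : ℝ × ℝ → ℝ) (p : ℝ × ℝ) : ℝ := deriv (fun u => f (u, p.2)) p.1

/-- Partial derivative in the second (`v`) coordinate. -/
noncomputable def pdv (f : ℝ × ℝ → ℝ) (p : ℝ × ℝ) : ℝ := deriv (fun v => f (p.1, v)) p.2

/-- The second renormalised Hawking mass `ϖ₂ = ϖ₁ − (2πg/l²)r³ψ²`, with
`ϖ₁ = 2rᵤrᵥr/Ω² + r³/(2l²)`. -/
noncomputable def varpi2 (l g : ℝ) (r Ω ψ : ℝ × ℝ → ℝ) (q : ℝ × ℝ) : ℝ :=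
  2 * pdu r q * pdv r q * r q / (Ω q) ^ 2 + (r q) ^ 3 / (2 * l ^ 2)
    - (2 * Real.pi * g / l ^ 2) * (r q) ^ 3 * (ψ q) ^ 2

/-!
Writing `r̃ = 1/r`, the chain rule gives `∂ᵤ∂ᵥr̃ = -r_{uv}/r² + 2rᵤrᵥ/r³`, where symmetry of second
derivatives of the `C²` function `r` lets us differentiate `∂ᵥr` in `u`. Substituting (EKG3) for
`r_{uv}` and expanding `ϖ₂`, the `rᵤrᵥ`, cosmological and `ψ²` terms match separately, the last
one precisely because `2a = g² + 3g`.
-/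

section Slices

variable {E : Type*} [NormedAddCommGroup E] [NormedSpace ℝ E]
  {f : ℝ × ℝ → E} {f' : ℝ × ℝ →L[ℝ] E} {p : ℝ × ℝ}

lemma HasFDerivAt.hasDerivAt_uSlice (hf : HasFDerivAt f f' p) :
    HasDerivAt (fun u => f (u, p.2)) (f' (1, 0)) p.1 :=
  hf.comp_hasDerivAt p.1 ((hasDerivAt_id p.1).prodMk (hasDerivAt_const p.1 p.2))

lemma HasFDerivAt.hasDerivAt_vSlice (hf : HasFDerivAt f f' p) :
    HasDerivAt (fun v => f (p.1, v)) (f' (0, 1)) p.2 :=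
  hf.comp_hasDerivAt p.2 ((hasDerivAt_const p.2 p.1).prodMk (hasDerivAt_id p.2))

end Slices

lemma IsOpen.eventually_mem_uSlice {U : Set (ℝ × ℝ)} (hU : IsOpen U) {p : ℝ × ℝ} (hp : p ∈ U) :
    ∀ᶠ u in nhds p.1, (u, p.2) ∈ U :=
  (continuous_id.prodMk continuous_const).continuousAt.preimage_mem_nhds (hU.mem_nhds hp)

lemma IsOpen.eventually_mem_vSlice {U : Set (ℝ × ℝ)} (hU : IsOpen U) {p : ℝ × ℝ} (hp : p ∈ U) :
    ∀ᶠ v in nhds p.2, (p.1, v) ∈ U :=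
  (continuous_const.prodMk continuous_id).continuousAt.preimage_mem_nhds (hU.mem_nhds hp)

section SecondDerivatives

variable {U : Set (ℝ × ℝ)} {f : ℝ × ℝ → ℝ}

lemma DifferentiableAt.hasDerivAt_pdu {p : ℝ × ℝ} (hf : DifferentiableAt ℝ f p) :
    HasDerivAt (fun u => f (u, p.2)) (pdu f p) p.1 :=
  hf.hasFDerivAt.hasDerivAt_uSlice.differentiableAt.hasDerivAt

lemma DifferentiableAt.hasDerivAt_pdv {p : ℝ × ℝ} (hf : DifferentiableAt ℝ f p) :
    HasDerivAt (fun v => f (p.1, v)) (pdv f p) p.2 :=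
  hf.hasFDerivAt.hasDerivAt_vSlice.differentiableAt.hasDerivAt

/-- Both derivatives are `D²f p` applied to `(1,0)` and `(0,1)`, in opposite orders, so Schwarz's
theorem identifies them. -/
lemma ContDiffOn.hasDerivAt_uSlice_pdv (hU : IsOpen U) (hf : ContDiffOn ℝ 2 f U) {p : ℝ × ℝ}
    (hp : p ∈ U) : HasDerivAt (fun u => pdv f (u, p.2)) (pdv (pdu f) p) p.1 := by
  set F := fderiv ℝ f
  have hfF : ∀ q ∈ U, HasFDerivAt f (F q) q := fun q hq =>
    ((hf.contDiffAt (hU.mem_nhds hq)).differentiableAt (by norm_num)).hasFDerivAt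
  have hF : HasFDerivAt F (fderiv ℝ F p) p :=
    (((hf.fderiv_of_isOpen hU (by norm_num) : ContDiffOn ℝ 1 F U).contDiffAt
      (hU.mem_nhds hp)).differentiableAt one_ne_zero).hasFDerivAt
  have hsymm : fderiv ℝ F p (1, 0) (0, 1) = fderiv ℝ F p (0, 1) (1, 0) :=
    second_derivative_symmetric_of_eventually
      (Filter.eventually_of_mem (hU.mem_nhds hp) hfF) hF _ _
  have hpdu : HasDerivAt (fun v => pdu f (p.1, v)) (fderiv ℝ F p (0, 1) (1, 0)) p.2 := by
    refine ((ContinuousLinearMap.apply ℝ ℝ ((1 : ℝ), (0 : ℝ))).hasFDerivAt.comp_hasDerivAt p.2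
      hF.hasDerivAt_vSlice).congr_of_eventuallyEq ?_
    filter_upwards [hU.eventually_mem_vSlice hp] with v hv
    exact (hfF _ hv).hasDerivAt_uSlice.deriv
  rw [show pdv (pdu f) p = _ from hpdu.deriv, ← hsymm]
  refine ((ContinuousLinearMap.apply ℝ ℝ ((0 : ℝ), (1 : ℝ))).hasFDerivAt.comp_hasDerivAt p.1
    hF.hasDerivAt_uSlice).congr_of_eventuallyEq ?_
  filter_upwards [hU.eventually_mem_uSlice hp] with u hu
  exact (hfF _ hu).hasDerivAt_vSlice.deriv

lemma pdu_pdv_one_div (hU : IsOpen U) (hf : ContDiffOn ℝ 2 f U) (hf0 : ∀ q ∈ U, f q ≠ 0)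
    {p : ℝ × ℝ} (hp : p ∈ U) :
    pdu (pdv (fun q => 1 / f q)) p
      = -pdv (pdu f) p / f p ^ 2 + 2 * pdu f p * pdv f p / f p ^ 3 := by
  have hdiff : ∀ q ∈ U, DifferentiableAt ℝ f q := fun q hq =>
    (hf.differentiableOn (by norm_num)).differentiableAt (hU.mem_nhds hq)
  have hpdv : (fun u => pdv (fun q => 1 / f q) (u, p.2))
      =ᶠ[nhds p.1] fun u => -pdv f (u, p.2) / f (u, p.2) ^ 2 := by
    filter_upwards [hU.eventually_mem_uSlice hp] with u hu
    rw [pdv]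
    simpa only [one_div] using ((hdiff _ hu).hasDerivAt_pdv.fun_inv (hf0 _ hu)).deriv
  have hquot := (hf.hasDerivAt_uSlice_pdv hU hp).fun_neg.fun_div
    ((hdiff p hp).hasDerivAt_pdu.fun_pow 2) (pow_ne_zero 2 (hf0 p hp))
  rw [pdu, (hquot.congr_of_eventuallyEq hpdv).deriv]
  field_simp [hf0 p hp]
  ring

end SecondDerivatives

theorem stmt_6_general (U : Set (ℝ × ℝ)) (hU : IsOpen U)
    (r Ω ψ : ℝ × ℝ → ℝ)
    (l κ a g : ℝ)
    (ha : a = κ ^ 2 / 2 - 9 / 8) (hg : g = -3 / 2 + κ)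
    (hrC : ContDiffOn ℝ 2 r U)
    (hrpos : ∀ p ∈ U, 0 < r p) (hΩpos : ∀ p ∈ U, 0 < Ω p)
    (hEKG3 : ∀ p ∈ U, pdv (pdu r) p = -(pdu r p * pdv r p) / r p
        + (2 * Real.pi * a * r p / l ^ 2) * (Ω p) ^ 2 * (ψ p) ^ 2
        - (3 / 4) * (r p / l ^ 2) * (Ω p) ^ 2) :
    ∀ p ∈ U,
      pdu (pdv (fun q => 1 / r q)) p
        = (Ω p) ^ 2 * (1 / r p) ^ 2
            * ((3 / 2) * varpi2 l g r Ω ψ p * (1 / r p) ^ 2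
               - (Real.pi * g ^ 2 / (l ^ 2 * (1 / r p))) * (ψ p) ^ 2) := by
  intro p hp
  rw [pdu_pdv_one_div hU hrC (fun q hq => (hrpos q hq).ne') hp, hEKG3 p hp, varpi2, ha, hg]
  field_simp [(hrpos p hp).ne', (hΩpos p hp).ne']
  ring

/-- If `r, Ω, ψ` satisfy the toroidally symmetric Einstein–Klein-Gordon system
(EKG1)–(EKG5) on an open set `U`, then with `r̃ = 1/r` the renormalised radial wave
equation `∂ᵤ∂ᵥr̃ = Ω²r̃²((3/2)ϖ₂r̃² − (πg²/(l²r̃))ψ²)` holds on `U`. -/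
theorem stmt_6 (U : Set (ℝ × ℝ)) (hU : IsOpen U)
    (r Ω ψ : ℝ × ℝ → ℝ)
    (l κ a g : ℝ) (hl : 0 < l) (hκ : κ ∈ Set.Ioo (0 : ℝ) 1)
    (ha : a = κ ^ 2 / 2 - 9 / 8) (hg : g = -3 / 2 + κ)
    (hrC : ContDiffOn ℝ 2 r U) (hΩC : ContDiffOn ℝ 2 Ω U) (hψC : ContDiffOn ℝ 2 ψ U)
    (hrpos : ∀ p ∈ U, 0 < r p) (hΩpos : ∀ p ∈ U, 0 < Ω p)
    (hEKG1 : ∀ p ∈ U, pdu (fun q => pdu r q / (Ω q) ^ 2) p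
        = -(4 * Real.pi) * r p * (pdu ψ p) ^ 2 / (Ω p) ^ 2)
    (hEKG2 : ∀ p ∈ U, pdv (fun q => pdv r q / (Ω q) ^ 2) p
        = -(4 * Real.pi) * r p * (pdv ψ p) ^ 2 / (Ω p) ^ 2)
    (hEKG3 : ∀ p ∈ U, pdv (pdu r) p = -(pdu r p * pdv r p) / r p
        + (2 * Real.pi * a * r p / l ^ 2) * (Ω p) ^ 2 * (ψ p) ^ 2
        - (3 / 4) * (r p / l ^ 2) * (Ω p) ^ 2)
    (hEKG4 : ∀ p ∈ U, pdv (pdu (fun q => Real.log (Ω q))) p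
        = -(4 * Real.pi) * pdu ψ p * pdv ψ p + (pdu r p * pdv r p) / (r p) ^ 2)
    (hEKG5 : ∀ p ∈ U, pdv (pdu ψ) p = -(pdu r p / r p) * pdv ψ p
        - (pdv r p / r p) * pdu ψ p - ((Ω p) ^ 2 * a / (2 * l ^ 2)) * ψ p) :
    ∀ p ∈ U,
      pdu (pdv (fun q => 1 / r q)) p
        = (Ω p) ^ 2 * (1 / r p) ^ 2
            * ((3 / 2) * varpi2 l g r Ω ψ p * (1 / r p) ^ 2
               - (Real.pi * g ^ 2 / (l ^ 2 * (1 / r p))) * (ψ p) ^ 2) :=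
  stmt_6_general U hU r Ω ψ l κ a g ha hg hrC hrpos hΩpos hEKG3
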